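/- With the same setting, the variance of m̂ = ∫_0^∞ (1 - 1/N)^{M_x} dx equals 2 ∫_0^∞ ∫_0^x p_x p_{x'}^{1 - 1/N} dx' dx − (E[X])^2, using the independence of increments M_x − M_{x'} and M_{x'} for x > x'. -/

import Mathlib

/-!
Write `t = 1 - 1/N`. Squaring `m̂` and applying Tonelli gives
`E[m̂²] = ∫∫ E[f x f y] dx dy` with `f x = t ^ M_x`, and since the integrand is symmetric this is
twice the integral over `y < x`. For `y < x`, `M_y` and `M_x - M_y` are independent Poisson
variables with rates `a = -N log p_y` and `b = -N log (p_x / p_y)`, so the probability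
generating function gives `E[t ^ M_y t ^ M_x] = E[(t²) ^ M_y] E[t ^ (M_x - M_y)]
= exp (a (t² - 1)) exp (b (t - 1)) = p_x p_y ^ t`.
-/

open MeasureTheory ProbabilityTheory Set
open scoped ENNReal NNReal

theorem MeasureTheory.Measure.le_of_forall_measure_singleton_le {α : Type*}
    [MeasurableSpace α] [Countable α] [MeasurableSingletonClass α] {μ ν : Measure α}
    (h : ∀ a, μ {a} ≤ ν {a}) : μ ≤ ν := by
  refine Measure.le_iff.2 fun s hs => ?_
  simp only [← lintegral_indicator_one hs, lintegral_countable']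
  exact ENNReal.tsum_le_tsum fun a => mul_le_mul' le_rfl (h a)

theorem lintegral_sq_lintegral {α Ω : Type*} [MeasurableSpace α] [MeasurableSpace Ω]
    {μ : Measure α} {P : Measure Ω} [SFinite μ] [SFinite P] {F : α → Ω → ℝ≥0∞}
    (hF : Measurable (Function.uncurry F)) :
    ∫⁻ ω, (∫⁻ x, F x ω ∂μ) ^ 2 ∂P = ∫⁻ x, ∫⁻ y, ∫⁻ ω, F x ω * F y ω ∂P ∂μ ∂μ := by
  have hFω : ∀ ω, Measurable fun x => F x ω :=
    fun ω => hF.comp (measurable_id.prodMk measurable_const)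
  calc ∫⁻ ω, (∫⁻ x, F x ω ∂μ) ^ 2 ∂P
      = ∫⁻ ω, ∫⁻ z, F z.1 ω * F z.2 ω ∂(μ.prod μ) ∂P := by
        congr with ω
        rw [sq, lintegral_prod_mul (hFω ω).aemeasurable (hFω ω).aemeasurable]
    _ = ∫⁻ z, ∫⁻ ω, F z.1 ω * F z.2 ω ∂P ∂(μ.prod μ) :=
        lintegral_lintegral_swap (by fun_prop)
    _ = _ := lintegral_prod _ (by fun_prop)

theorem lintegral_lintegral_eq_two_mul_lintegral_Iio {α : Type*} [LinearOrder α]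
    [TopologicalSpace α] [OrderClosedTopology α] [SecondCountableTopology α] [MeasurableSpace α]
    [OpensMeasurableSpace α] {μ : Measure α} [SFinite μ] [NullSingletonClass μ]
    {f : α → α → ℝ≥0∞} (hf : Measurable (Function.uncurry f)) (hsymm : ∀ x y, f x y = f y x) :
    ∫⁻ x, ∫⁻ y, f x y ∂μ ∂μ = 2 * ∫⁻ x, ∫⁻ y in Iio x, f x y ∂μ ∂μ := by
  have hIio : Measurable fun z : α × α => (Iio z.1).indicator (f z.1) z.2 :=
    hf.indicator (measurableSet_lt measurable_snd measurable_fst)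
  have hIoi : Measurable fun z : α × α => (Ioi z.1).indicator (f z.1) z.2 :=
    hf.indicator (measurableSet_lt measurable_fst measurable_snd)
  have hsplit : ∀ x, ∫⁻ y, f x y ∂μ = ∫⁻ y in Iio x, f x y ∂μ + ∫⁻ y in Ioi x, f x y ∂μ := by
    intro x
    rw [← lintegral_add_compl _ measurableSet_Iio, compl_Iio, setLIntegral_congr Ioi_ae_eq_Ici]
  have hswap : ∫⁻ x, ∫⁻ y in Ioi x, f x y ∂μ ∂μ = ∫⁻ x, ∫⁻ y in Iio x, f x y ∂μ ∂μ := by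
    simp only [← lintegral_indicator measurableSet_Ioi, ← lintegral_indicator measurableSet_Iio]
    rw [lintegral_lintegral_swap hIoi.aemeasurable]
    congr with x; congr with y
    simp only [indicator, mem_Ioi, mem_Iio, hsymm x y]
  rw [lintegral_congr hsplit, lintegral_add_left _, hswap, two_mul]
  simp only [← lintegral_indicator measurableSet_Iio]
  exact hIio.lintegral_prod_right'

theorem lintegral_ofReal_pow_poissonMeasure (r : ℝ≥0) {t : ℝ} (ht : 0 ≤ t) :
    ∫⁻ n, ENNReal.ofReal t ^ n ∂Po(r) = ENNReal.ofReal (Real.exp (r * (t - 1))) := by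
  have hsum : HasSum (fun n : ℕ => t ^ n * (Real.exp (-r) * r ^ n / n.factorial))
      (Real.exp (r * (t - 1))) := by
    have h := (NormedSpace.expSeries_div_hasSum_exp ((r : ℝ) * t)).mul_left (Real.exp (-r))
    have hterm : (fun n : ℕ => t ^ n * (Real.exp (-r) * r ^ n / n.factorial))
        = fun n => Real.exp (-r) * ((r * t) ^ n / n.factorial) := by
      ext n; rw [mul_pow]; ring
    rw [← Real.exp_eq_exp_ℝ, ← Real.exp_add] at h
    rwa [hterm, show (r : ℝ) * (t - 1) = -r + r * t by ring]
  simp only [lintegral_countable', poissonMeasure_singleton, ← ENNReal.ofReal_pow ht,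
    ← ENNReal.ofReal_mul (pow_nonneg ht _)]
  rw [← ENNReal.ofReal_tsum_of_nonneg (fun n => by positivity) hsum.summable, hsum.tsum_eq]

theorem poissonMeasure_toNNReal_singleton {c : ℝ} (hc : 0 ≤ c) (n : ℕ) :
    Po(c.toNNReal) {n} = ENNReal.ofReal (Real.exp (-c) * c ^ n / n.factorial) := by
  rw [poissonMeasure_singleton, Real.coe_toNNReal c hc]

theorem map_prodMk_eq_map_poissonMeasure_prod {Ω : Type*} {mΩ : MeasurableSpace Ω}
    {P : Measure Ω} [IsProbabilityMeasure P] {K L : Ω → ℕ} (hK : Measurable K)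
    (hL : Measurable L) {a b : ℝ≥0}
    (hlaw : ∀ k l : ℕ, P {ω | K ω = k ∧ L ω = k + l} = Po(a) {k} * Po(b) {l}) :
    P.map (fun ω => (K ω, L ω)) = (Po(a).prod Po(b)).map (fun kl => (kl.1, kl.1 + kl.2)) := by
  have hKL : Measurable (fun ω => (K ω, L ω)) := hK.prodMk hL
  have := Measure.isProbabilityMeasure_map (μ := P) hKL.aemeasurable
  have := Measure.isProbabilityMeasure_map (μ := Po(a).prod Po(b))
    (f := fun kl => (kl.1, kl.1 + kl.2)) (Measurable.of_discrete).aemeasurable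
  -- both sides are probability measures, so `≤` on singletons suffices
  refine (Measure.eq_of_le_of_isProbabilityMeasure
    (Measure.le_of_forall_measure_singleton_le fun ⟨k, n⟩ => ?_)).symm
  rw [Measure.map_apply .of_discrete (measurableSet_singleton _)]
  by_cases hkn : k ≤ n
  · obtain ⟨l, rfl⟩ := Nat.exists_eq_add_of_le hkn
    have hpre : (fun kl : ℕ × ℕ => (kl.1, kl.1 + kl.2)) ⁻¹' {(k, k + l)} = {k} ×ˢ {l} := by
      ext ⟨k', l'⟩; simp only [mem_preimage, mem_singleton_iff, Prod.mk.injEq, mem_prod]; omega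
    rw [hpre, Measure.prod_prod, Measure.map_apply hKL (measurableSet_singleton _), ← hlaw]
    refine le_of_eq (congrArg P ?_)
    ext ω; simp
  · have hpre : (fun kl : ℕ × ℕ => (kl.1, kl.1 + kl.2)) ⁻¹' {(k, n)} = ∅ := by
      ext ⟨k', l'⟩
      simp only [mem_preimage, mem_singleton_iff, Prod.mk.injEq, mem_empty_iff_false, iff_false]
      omega
    simp [hpre]

theorem lintegral_pow_mul_pow_of_poisson_increment {Ω : Type*} {mΩ : MeasurableSpace Ω}
    {P : Measure Ω} [IsProbabilityMeasure P] {K L : Ω → ℕ} (hK : Measurable K)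
    (hL : Measurable L) {a b : ℝ≥0}
    (hlaw : ∀ k l : ℕ, P {ω | K ω = k ∧ L ω = k + l} = Po(a) {k} * Po(b) {l})
    {t : ℝ} (ht : 0 ≤ t) :
    ∫⁻ ω, ENNReal.ofReal t ^ K ω * ENNReal.ofReal t ^ L ω ∂P
      = ENNReal.ofReal (Real.exp (a * (t ^ 2 - 1))) * ENNReal.ofReal (Real.exp (b * (t - 1))) := by
  set s := ENNReal.ofReal t
  calc ∫⁻ ω, s ^ K ω * s ^ L ω ∂P
      = ∫⁻ z, s ^ z.1 * s ^ z.2 ∂(P.map fun ω => (K ω, L ω)) :=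
        (lintegral_map (f := fun z : ℕ × ℕ => s ^ z.1 * s ^ z.2) .of_discrete
          (hK.prodMk hL)).symm
    _ = ∫⁻ kl, (s ^ 2) ^ kl.1 * s ^ kl.2 ∂(Po(a).prod Po(b)) := by
        rw [map_prodMk_eq_map_poissonMeasure_prod hK hL hlaw, lintegral_map .of_discrete
          .of_discrete]
        simp only [pow_add, ← pow_mul, mul_assoc, two_mul]
    _ = _ := by
        rw [lintegral_prod_mul .of_discrete .of_discrete, ← ENNReal.ofReal_pow ht,
          lintegral_ofReal_pow_poissonMeasure a (sq_nonneg t),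
          lintegral_ofReal_pow_poissonMeasure b ht]

theorem lintegral_pow_mul_pow_eq_mul_rpow {Ω : Type*} {mΩ : MeasurableSpace Ω}
    {P : Measure Ω} [IsProbabilityMeasure P] {K L : Ω → ℕ} (hK : Measurable K)
    (hL : Measurable L) {N : ℕ} (hN : 1 ≤ N) {q r : ℝ} (hr : 0 < r) (hrq : r ≤ q) (hq : q ≤ 1)
    (hlaw : ∀ k l : ℕ, P {ω | K ω = k ∧ L ω = k + l} =
        ENNReal.ofReal (Real.exp ((N:ℝ) * Real.log q)
            * (-((N:ℝ) * Real.log q)) ^ k / (Nat.factorial k))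
        * ENNReal.ofReal (Real.exp ((N:ℝ) * Real.log (r / q))
            * (-((N:ℝ) * Real.log (r / q))) ^ l / (Nat.factorial l))) :
    ∫⁻ ω, ENNReal.ofReal ((1 - 1/(N:ℝ)) ^ K ω) * ENNReal.ofReal ((1 - 1/(N:ℝ)) ^ L ω) ∂P
      = ENNReal.ofReal (r * q ^ (1 - 1/(N:ℝ))) := by
  have hq0 : 0 < q := hr.trans_le hrq
  have ht : 0 ≤ 1 - 1/(N:ℝ) := by
    rw [sub_nonneg, div_le_one (by positivity)]; exact_mod_cast hN
  have ha : 0 ≤ -((N:ℝ) * Real.log q) :=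
    neg_nonneg.2 (mul_nonpos_of_nonneg_of_nonpos (by positivity) (Real.log_nonpos hq0.le hq))
  have hb : 0 ≤ -((N:ℝ) * Real.log (r / q)) :=
    neg_nonneg.2 (mul_nonpos_of_nonneg_of_nonpos (by positivity)
      (Real.log_nonpos (by positivity) ((div_le_one hq0).2 hrq)))
  have hPo : ∀ k l : ℕ, P {ω | K ω = k ∧ L ω = k + l} =
      Po((-((N:ℝ) * Real.log q)).toNNReal) {k}
        * Po((-((N:ℝ) * Real.log (r / q))).toNNReal) {l} := by
    intro k l
    rw [poissonMeasure_toNNReal_singleton ha, poissonMeasure_toNNReal_singleton hb, neg_neg,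
      neg_neg, hlaw]
  simp only [ENNReal.ofReal_pow ht]
  rw [lintegral_pow_mul_pow_of_poisson_increment hK hL hPo ht, Real.coe_toNNReal _ ha,
    Real.coe_toNNReal _ hb, ← ENNReal.ofReal_mul (Real.exp_nonneg _), ← Real.exp_add,
    Real.log_div hr.ne' hq0.ne', Real.rpow_def_of_pos hq0]
  conv_rhs => rw [← Real.exp_log hr, ← Real.exp_add]
  congr 2
  field_simp
  ring

/-- With `(M_x)` the counting process of the marked Poisson process (independent increments:
for `x' < x`, `M_{x'} ~ Poisson(-N log p_{x'})` and `M_x - M_{x'} ~ Poisson(-N log(p_x/p_{x'}))`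
independent of `M_{x'}`), the variance of `m̂ = ∫_0^∞ (1-1/N)^{M_x} dx` equals
`2 ∫_0^∞ ∫_0^x p_x p_{x'}^{1-1/N} dx' dx − (E[X])²` (here `E[m̂] = E[X] = ∫_0^∞ p_x dx`). -/
theorem stmt_6 {Ω : Type*} [MeasureSpace Ω] [IsProbabilityMeasure (ℙ : Measure Ω)]
    (p : ℝ → ℝ) (hp0 : ∀ x, 0 ≤ p x) (hp1 : ∀ x, p x ≤ 1) (hmono : Antitone p)
    (N : ℕ) (hN : 2 ≤ N)
    (M : ℝ → Ω → ℕ) (hM : Measurable (fun q : ℝ × Ω => M q.1 q.2))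
    (hlaw : ∀ x' x : ℝ, 0 < x' → x' < x → 0 < p x → ∀ k l : ℕ,
      ℙ {ω | M x' ω = k ∧ M x ω = k + l} =
        ENNReal.ofReal (Real.exp ((N:ℝ) * Real.log (p x'))
            * (-((N:ℝ) * Real.log (p x'))) ^ k / (Nat.factorial k))
        * ENNReal.ofReal (Real.exp ((N:ℝ) * Real.log (p x / p x'))
            * (-((N:ℝ) * Real.log (p x / p x'))) ^ l / (Nat.factorial l))) :
    (∫⁻ ω, (∫⁻ x in Ioi (0:ℝ),
          (if p x = 0 then 0 else ENNReal.ofReal ((1 - 1/(N:ℝ)) ^ (M x ω)))) ^ 2 ∂ℙ)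
        - (∫⁻ x in Ioi (0:ℝ), ENNReal.ofReal (p x)) ^ 2
      = 2 * (∫⁻ x in Ioi (0:ℝ), ∫⁻ y in Ioo (0:ℝ) x,
            ENNReal.ofReal (p x * p y ^ (1 - 1/(N:ℝ))))
        - (∫⁻ x in Ioi (0:ℝ), ENNReal.ofReal (p x)) ^ 2 := by
  congr 1
  set t : ℝ := 1 - 1/(N:ℝ)
  set F : ℝ → Ω → ℝ≥0∞ := fun x ω => if p x = 0 then 0 else ENNReal.ofReal (t ^ M x ω)
  have hF : Measurable (Function.uncurry F) :=
    Measurable.ite ((hmono.measurable.comp measurable_fst) (measurableSet_singleton 0))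
      measurable_const (ENNReal.measurable_ofReal.comp (.comp .of_discrete hM))
  have hcov : ∀ x y, 0 < y → y < x →
      ∫⁻ ω, F x ω * F y ω = ENNReal.ofReal (p x * p y ^ t) := by
    intro x y hy hyx
    rcases (hp0 x).eq_or_lt with hpx | hpx
    · simp [F, ← hpx]
    have hpy : 0 < p y := hpx.trans_le (hmono hyx.le)
    simp only [F, hpx.ne', hpy.ne', if_false, mul_comm (ENNReal.ofReal (t ^ M x _))]
    exact lintegral_pow_mul_pow_eq_mul_rpow (hM.comp measurable_prodMk_left)
      (hM.comp measurable_prodMk_left) (by omega) hpx (hmono hyx.le) (hp1 y)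
      (hlaw y x hy hyx hpx)
  have hFF : Measurable fun z : ℝ × ℝ => ∫⁻ ω, F z.1 ω * F z.2 ω :=
    ((hF.comp (measurable_fst.fst.prodMk measurable_snd)).mul
      (hF.comp (measurable_fst.snd.prodMk measurable_snd))).lintegral_prod_right'
  rw [lintegral_sq_lintegral hF, lintegral_lintegral_eq_two_mul_lintegral_Iio hFF
    fun x y => by simp only [mul_comm]]
  congr 1
  refine lintegral_congr fun x => ?_
  rw [Measure.restrict_restrict measurableSet_Iio, Iio_inter_Ioi]
  exact setLIntegral_congr_fun measurableSet_Ioo fun y hy => hcov x y hy.1 hy.2
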